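/- arXiv:1102.1115 — 2 statements merged into one kernel-verified Lean document; each statement's English description precedes it below -/
import Mathlib

section
/- Every finite two-player zero-sum matrix game admits a mixed-strategy saddle-point equilibrium. Precisely: for any n, m ≥ 1 and any payoff matrix A ∈ ℝ^{n×m}, there exist mixed strategies x* ∈ Δ_n and y* ∈ Δ_m such that for all x ∈ Δ_n and all y ∈ Δ_m, x*ᵀ A y ≤ x*ᵀ A y* ≤ xᵀ A y*. -/
/-!
Let `x*` minimise the security level `v(x) = maxⱼ (xᵀA)ⱼ` over the compact simplex `Δₙ`.
If no `y ∈ Δₘ` had `A y ≥ v(x*)` componentwise, the compact convex set `A(Δₘ)` would miss the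
closed orthant `v(x*) 𝟙 + ℝⁿ₊`, and a strictly separating functional, nonnegative because it is
bounded below on the orthant, would normalise to some `x ∈ Δₙ` with `v(x) < v(x*)`.
So such a `y*` exists, and then `xᵀ A y* ≥ v(x*) ≥ x*ᵀ A y` for all `x ∈ Δₙ`, `y ∈ Δₘ`.
-/

/-- Expected payoff `xᵀ A y` of a zero-sum matrix game under mixed strategies `x, y`. -/
noncomputable def payoff {n m : ℕ} (A : Fin n → Fin m → ℝ)
    (x : Fin n → ℝ) (y : Fin m → ℝ) : ℝ :=
  ∑ i, ∑ j, x i * A i j * y j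

open Finset Matrix Set

lemma nonneg_of_forall_lt_add_mul {w b p : ℝ} (h : ∀ t : ℝ, 0 ≤ t → w < b + t * p) : 0 ≤ p := by
  by_contra! hp
  have hb : w < b := by simpa using h 0 le_rfl
  have := h ((b - w) / -p) (div_nonneg (by linarith) (by linarith))
  have hcancel : (b - w) / -p * p = w - b := by
    rw [div_neg, neg_mul, div_mul_cancel₀ _ hp.ne, neg_sub]
  linarith

section Simplex

variable {ι : Type*} [Fintype ι]

lemma dotProduct_le_of_mem_stdSimplex {v y : ι → ℝ} {c : ℝ} (hy : y ∈ stdSimplex ℝ ι)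
    (hv : ∀ j, v j ≤ c) : v ⬝ᵥ y ≤ c :=
  calc v ⬝ᵥ y ≤ ∑ j, c * y j := sum_le_sum fun j _ => mul_le_mul_of_nonneg_right (hv j) (hy.1 j)
    _ = c := by rw [← mul_sum, hy.2, mul_one]

lemma le_dotProduct_of_mem_stdSimplex {x v : ι → ℝ} {c : ℝ} (hx : x ∈ stdSimplex ℝ ι)
    (hv : ∀ i, c ≤ v i) : c ≤ x ⬝ᵥ v :=
  calc c = ∑ i, x i * c := by rw [← sum_mul, hx.2, one_mul]
    _ ≤ x ⬝ᵥ v := sum_le_sum fun i _ => mul_le_mul_of_nonneg_left (hv i) (hx.1 i)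

lemma dotProduct_const_of_mem_stdSimplex {x : ι → ℝ} (hx : x ∈ stdSimplex ℝ ι) (c : ℝ) :
    x ⬝ᵥ Function.const ι c = c := by
  simp [dotProduct, ← sum_mul, hx.2]

lemma inv_sum_smul_mem_stdSimplex {p : ι → ℝ} (hp : 0 < p) :
    (∑ i, p i)⁻¹ • p ∈ stdSimplex ℝ ι := by
  have hsum := Fintype.sum_pos hp
  refine ⟨fun i => smul_nonneg (inv_nonneg.2 hsum.le) (hp.le i), ?_⟩
  simp [← mul_sum, hsum.ne']

lemma exists_nonneg_dotProduct_lt_of_disjoint_Ici {K : Set (ι → ℝ)} (hconv : Convex ℝ K)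
    (hcomp : IsCompact K) {a : ι → ℝ} (hdisj : Disjoint K (Ici a)) :
    ∃ p : ι → ℝ, 0 ≤ p ∧ ∀ z ∈ K, p ⬝ᵥ z < p ⬝ᵥ a := by
  classical
  obtain ⟨φ, u, w, hφK, huw, hφIci⟩ :=
    geometric_hahn_banach_compact_closed hconv hcomp (convex_Ici a) isClosed_Ici hdisj
  set p := (dotProductEquiv ℝ ι).symm φ.toLinearMap
  have hφ : ∀ z, φ z = p ⬝ᵥ z := fun z => by
    rw [← dotProductEquiv_apply_apply, LinearEquiv.apply_symm_apply]; rfl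
  refine ⟨p, fun i => nonneg_of_forall_lt_add_mul (w := w) (b := p ⬝ᵥ a) fun t ht => ?_,
    fun z hz => ?_⟩
  · have := hφIci (a + t • Pi.single i 1) (mem_Ici.2 (le_add_of_nonneg_right (smul_nonneg ht ?_)))
    · simpa [hφ, dotProduct_add, dotProduct_smul, dotProduct_single] using this
    · exact Pi.single_nonneg.2 zero_le_one
  · rw [← hφ, ← hφ]
    exact (hφK z hz).trans (huw.trans (hφIci a self_mem_Ici))

lemma exists_mem_stdSimplex_dotProduct_lt_of_disjoint_Ici {K : Set (ι → ℝ)}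
    (hconv : Convex ℝ K) (hcomp : IsCompact K) (hne : K.Nonempty) {a : ι → ℝ}
    (hdisj : Disjoint K (Ici a)) :
    ∃ x ∈ stdSimplex ℝ ι, ∀ z ∈ K, x ⬝ᵥ z < x ⬝ᵥ a := by
  obtain ⟨p, hp, hsep⟩ := exists_nonneg_dotProduct_lt_of_disjoint_Ici hconv hcomp hdisj
  have hp_pos : 0 < p := hp.lt_of_ne <| by
    rintro rfl
    obtain ⟨z, hz⟩ := hne
    simpa using hsep z hz
  refine ⟨_, inv_sum_smul_mem_stdSimplex hp_pos, fun z hz => ?_⟩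
  simp only [smul_dotProduct, smul_eq_mul]
  exact mul_lt_mul_of_pos_left (hsep z hz) (inv_pos.2 (Fintype.sum_pos hp_pos))

end Simplex

section MatrixGame

variable {ι κ : Type*} [Fintype ι] [Fintype κ]

theorem Matrix.exists_le_mulVec_or_exists_vecMul_lt [Nonempty κ] (A : Matrix ι κ ℝ) (c : ℝ) :
    (∃ y ∈ stdSimplex ℝ κ, ∀ i, c ≤ (A *ᵥ y) i) ∨ ∃ x ∈ stdSimplex ℝ ι, ∀ j, (x ᵥ* A) j < c := by
  classical
  refine or_iff_not_imp_left.2 fun h => ?_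
  have hdisj : Disjoint (A.mulVecLin '' stdSimplex ℝ κ) (Ici (Function.const ι c)) := by
    rw [Set.disjoint_left]
    rintro _ ⟨y, hy, rfl⟩ hle
    exact h ⟨y, hy, hle⟩
  have hne : (stdSimplex ℝ κ).Nonempty := ⟨_, single_mem_stdSimplex ℝ (Classical.arbitrary κ)⟩
  obtain ⟨x, hx, hsep⟩ := exists_mem_stdSimplex_dotProduct_lt_of_disjoint_Ici
    ((convex_stdSimplex ℝ κ).linear_image _)
    ((isCompact_stdSimplex ℝ κ).image A.mulVecLin.continuous_of_finiteDimensional)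
    (hne.image _) hdisj
  refine ⟨x, hx, fun j => ?_⟩
  have := hsep _ (mem_image_of_mem _ (single_mem_stdSimplex ℝ j))
  rwa [mulVecLin_apply, dotProduct_mulVec, dotProduct_single, mul_one,
    dotProduct_const_of_mem_stdSimplex hx] at this

variable [Nonempty κ] (A : Matrix ι κ ℝ)

noncomputable def securityLevel (x : ι → ℝ) : ℝ :=
  univ.sup' univ_nonempty (x ᵥ* A)

lemma continuous_securityLevel : Continuous (securityLevel A) :=
  Continuous.finset_sup'_apply _ fun j _ =>
    (continuous_apply j).comp (continuous_id.matrix_vecMul continuous_const)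

lemma securityLevel_lt_iff {x : ι → ℝ} {c : ℝ} : securityLevel A x < c ↔ ∀ j, (x ᵥ* A) j < c := by
  simp [securityLevel, sup'_lt_iff]

lemma vecMul_dotProduct_le_securityLevel (x : ι → ℝ) {y : κ → ℝ} (hy : y ∈ stdSimplex ℝ κ) :
    (x ᵥ* A) ⬝ᵥ y ≤ securityLevel A x :=
  dotProduct_le_of_mem_stdSimplex hy fun j => le_sup' (x ᵥ* A) (mem_univ j)

end MatrixGame

section Payoff

variable {n m : ℕ} (A : Fin n → Fin m → ℝ) (x : Fin n → ℝ) (y : Fin m → ℝ)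

lemma payoff_eq_dotProduct_mulVec : payoff A x y = x ⬝ᵥ (of A *ᵥ y) := by
  simp [payoff, dotProduct, mulVec, mul_sum, mul_assoc]

lemma payoff_eq_vecMul_dotProduct : payoff A x y = (x ᵥ* of A) ⬝ᵥ y := by
  rw [payoff_eq_dotProduct_mulVec, dotProduct_mulVec]

end Payoff

/-- Every finite two-player zero-sum matrix game (with at least one row and one
column) admits a mixed-strategy saddle-point equilibrium. -/
theorem matrix_game_exists_MSSPE (n m : ℕ) (A : Fin (n + 1) → Fin (m + 1) → ℝ) :
    ∃ xs ∈ stdSimplex ℝ (Fin (n + 1)), ∃ ys ∈ stdSimplex ℝ (Fin (m + 1)),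
      (∀ y ∈ stdSimplex ℝ (Fin (m + 1)), payoff A xs y ≤ payoff A xs ys) ∧
      (∀ x ∈ stdSimplex ℝ (Fin (n + 1)), payoff A xs ys ≤ payoff A x ys) := by
  obtain ⟨xs, hxs, hxs_min⟩ := (isCompact_stdSimplex ℝ (Fin (n + 1))).exists_isMinOn
    ⟨_, single_mem_stdSimplex ℝ 0⟩ (continuous_securityLevel (of A)).continuousOn
  obtain ⟨ys, hys, hys_ge⟩ :=
    (exists_le_mulVec_or_exists_vecMul_lt (of A) (securityLevel (of A) xs)).resolve_right
      fun ⟨x, hx, hlt⟩ => (hxs_min hx).not_gt ((securityLevel_lt_iff _).2 hlt)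
  have payoff_xs_le : ∀ y ∈ stdSimplex ℝ (Fin (m + 1)), payoff A xs y ≤ securityLevel (of A) xs :=
    fun y hy => (payoff_eq_vecMul_dotProduct A xs y).trans_le
      (vecMul_dotProduct_le_securityLevel (of A) xs hy)
  have le_payoff_ys : ∀ x ∈ stdSimplex ℝ (Fin (n + 1)), securityLevel (of A) xs ≤ payoff A x ys :=
    fun x hx => (le_dotProduct_of_mem_stdSimplex hx hys_ge).trans_eq
      (payoff_eq_dotProduct_mulVec A x ys).symm
  exact ⟨xs, hxs, ys, hys, fun y hy => (payoff_xs_le y hy).trans (le_payoff_ys xs hxs),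
    fun x hx => (payoff_xs_le ys hys).trans (le_payoff_ys x hx)⟩
end

section
/- For every β > 0, the function f(x) = Q(√(β x)) is strictly convex on the interval (0, ∞), where Q is the Gaussian Q-function. -/
/-- The Gaussian Q-function: the tail probability of the standard normal distribution. -/
noncomputable def gaussQ (t : ℝ) : ℝ :=
  ∫ u in Set.Ioi t, (1 / Real.sqrt (2 * Real.pi)) * Real.exp (-u ^ 2 / 2)

open MeasureTheory ProbabilityTheory Real Set

/-!
Since `Q' = -φ` with `φ` the standard normal density, the chain rule gives
`d/dx Q(√(βx)) = -φ(√(βx)) · β / (2√(βx))`. For `s > 0` both `φ(s)` and `β / (2s)` are positive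
and strictly decreasing, and `√(βx)` is strictly increasing in `x`, so this derivative is strictly
increasing on `(0, ∞)`.
-/

theorem hasDerivAt_setIntegral_Ioi {E : Type*} [NormedAddCommGroup E] [NormedSpace ℝ E]
    [CompleteSpace E] {f : ℝ → E} {t : ℝ} (hf : Integrable f) (ht : ContinuousAt f t) :
    HasDerivAt (fun s => ∫ u in Ioi s, f u) (-f t) t := by
  have hsplit : (fun s => ∫ u in Ioi s, f u) = fun s => (∫ u in Ioi t, f u) - ∫ u in t..s, f u :=
    funext fun s => by
      rw [← intervalIntegral.integral_Ioi_sub_Ioi' hf.integrableOn hf.integrableOn, sub_sub_cancel]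
  rw [hsplit]
  exact (intervalIntegral.integral_hasDerivAt_right hf.intervalIntegrable
    hf.aestronglyMeasurable.stronglyMeasurableAtFilter ht).const_sub _

theorem continuous_gaussianPDFReal (μ : ℝ) (v : NNReal) : Continuous (gaussianPDFReal μ v) := by
  unfold gaussianPDFReal
  fun_prop

theorem strictAntiOn_gaussianPDFReal (μ : ℝ) {v : NNReal} (hv : v ≠ 0) :
    StrictAntiOn (gaussianPDFReal μ v) (Ici μ) := by
  intro x hx y hy hxy
  simp only [gaussianPDFReal, mem_Ici] at *
  gcongr

theorem StrictAntiOn.mul_of_nonneg {α M₀ : Type*} [Preorder α] [MulZeroClass M₀] [PartialOrder M₀]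
    [PosMulStrictMono M₀] [MulPosStrictMono M₀] {s : Set α} {f g : α → M₀}
    (hf : StrictAntiOn f s) (hg : StrictAntiOn g s) (hf₀ : ∀ x ∈ s, 0 ≤ f x)
    (hg₀ : ∀ x ∈ s, 0 ≤ g x) : StrictAntiOn (fun x => f x * g x) s :=
  fun _ hx _ hy hxy => mul_lt_mul'' (hf hx hy hxy) (hg hx hy hxy) (hf₀ _ hy) (hg₀ _ hy)

theorem gaussQ_eq_setIntegral_gaussianPDFReal (t : ℝ) :
    gaussQ t = ∫ u in Ioi t, gaussianPDFReal 0 1 u := by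
  simp [gaussQ, gaussianPDFReal]

theorem hasDerivAt_gaussQ (t : ℝ) : HasDerivAt gaussQ (-gaussianPDFReal 0 1 t) t := by
  rw [funext gaussQ_eq_setIntegral_gaussianPDFReal]
  exact hasDerivAt_setIntegral_Ioi (integrable_gaussianPDFReal 0 1)
    (continuous_gaussianPDFReal 0 1).continuousAt

theorem continuous_gaussQ : Continuous gaussQ :=
  continuous_iff_continuousAt.2 fun t => (hasDerivAt_gaussQ t).continuousAt

theorem hasDerivAt_gaussQ_sqrt_mul {β x : ℝ} (hβx : β * x ≠ 0) :
    HasDerivAt (fun x => gaussQ √(β * x))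
      (-(gaussianPDFReal 0 1 √(β * x) * (β / (2 * √(β * x))))) x := by
  have hsqrt : HasDerivAt (fun x => √(β * x)) (β / (2 * √(β * x))) x := by
    simpa using ((hasDerivAt_id x).const_mul β).sqrt hβx
  exact ((hasDerivAt_gaussQ _).comp x hsqrt).congr_deriv (neg_mul _ _)

theorem strictAntiOn_gaussianPDFReal_mul_div {β : ℝ} (hβ : 0 < β) :
    StrictAntiOn (fun s => gaussianPDFReal 0 1 s * (β / (2 * s))) (Ioi 0) :=
  ((strictAntiOn_gaussianPDFReal 0 one_ne_zero).mono Ioi_subset_Ici_self).mul_of_nonneg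
    (fun _ hx _ hy hxy => by gcongr; exact mul_pos two_pos hx)
    (fun s _ => gaussianPDFReal_nonneg 0 1 s)
    fun _ hs => div_nonneg hβ.le (mul_pos two_pos hs).le

theorem strictMonoOn_sqrt_mul {β : ℝ} (hβ : 0 < β) : StrictMonoOn (fun x => √(β * x)) (Ioi 0) :=
  fun _ hx _ _ hxy => sqrt_lt_sqrt (mul_pos hβ hx).le (mul_lt_mul_of_pos_left hxy hβ)

/-- For every `β > 0`, the function `x ↦ Q(√(β x))` is strictly convex on `(0, ∞)`. -/
theorem strictConvexOn_gaussQ_sqrt (β : ℝ) (hβ : 0 < β) :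
    StrictConvexOn ℝ (Set.Ioi (0 : ℝ)) (fun x => gaussQ (Real.sqrt (β * x))) := by
  have hcont : ContinuousOn (fun x => gaussQ √(β * x)) (Ioi 0) :=
    (continuous_gaussQ.comp (continuous_sqrt.comp (continuous_const_mul β))).continuousOn
  have hmaps : MapsTo (fun x => √(β * x)) (Ioi 0) (Ioi 0) :=
    fun x hx => sqrt_pos.2 (mul_pos hβ hx)
  refine StrictMonoOn.strictConvexOn_of_deriv (convex_Ioi 0) hcont ?_
  rw [interior_Ioi]
  refine (((strictAntiOn_gaussianPDFReal_mul_div hβ).comp_strictMonoOn (strictMonoOn_sqrt_mul hβ)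
    hmaps).neg).congr fun x hx => ?_
  exact ((hasDerivAt_gaussQ_sqrt_mul (mul_pos hβ hx).ne').deriv).symm
end
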